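/- arXiv:2603.18975 — 8 statements merged into one kernel-verified Lean document; each statement's English description precedes it below -/
import Mathlib

section
/- For every integer p ≥ 3 and every integer i with 1 ≤ i ≤ p−3, one has V_i(λ_p) ≥ λ_p. -/
/-- `chebAux n x` is `V (n-1) x`: `chebAux 0 = V_{-1} = 0`, `chebAux 1 = V_0 = 1`,
and `chebAux (n+2) x = V_{n+1}(x) = x * V_n(x) - V_{n-1}(x)`. -/
noncomputable def chebAux : ℕ → ℝ → ℝ
  | 0, _ => 0
  | 1, _ => 1
  | (n+2), x => x * chebAux (n+1) x - chebAux n x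

/-- `lam p = λ_p = 2 cos (π / p)`. -/
noncomputable def lam (p : ℕ) : ℝ := 2 * Real.cos (Real.pi / p)

lemma cheb_sin (θ : ℝ) : ∀ n : ℕ, chebAux n (2 * Real.cos θ) * Real.sin θ = Real.sin (n * θ)
  | 0 => by simp [chebAux]
  | 1 => by simp [chebAux]
  | (n+2) => by
      have h1 := cheb_sin θ (n+1)
      have h0 := cheb_sin θ n
      simp only [chebAux]
      have e2 : ((n : ℝ) + 2) * θ = ((n : ℝ) + 1) * θ + θ := by ring
      have e0 : (n : ℝ) * θ = ((n : ℝ) + 1) * θ - θ := by ring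
      push_cast at h1 h0 ⊢
      rw [e2, Real.sin_add]
      rw [e0, Real.sin_sub] at h0
      linear_combination 2 * Real.cos θ * h1 - h0

open Real in
lemma sin_ge (q x : ℝ) (hx : 2 ≤ x) (hxq : x + 2 ≤ q) :
    Real.sin (2 * (π / q)) ≤ Real.sin (x * (π / q)) := by
  have hq : (0:ℝ) < q := by linarith
  have hθ : 0 < π / q := div_pos pi_pos hq
  rcases le_or_gt (2 * x) q with h | h
  · apply Real.sin_le_sin_of_le_of_le_pi_div_two
    · nlinarith [pi_pos, hθ]
    · rw [← mul_div_assoc, div_le_div_iff₀ hq two_pos]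
      nlinarith [pi_pos]
    · nlinarith [hθ]
  · have hrw : x * (π / q) = π - (q - x) * (π / q) := by
      field_simp; ring
    rw [hrw, Real.sin_pi_sub]
    apply Real.sin_le_sin_of_le_of_le_pi_div_two
    · nlinarith [pi_pos, hθ]
    · rw [← mul_div_assoc, div_le_div_iff₀ hq two_pos]
      nlinarith [pi_pos]
    · nlinarith [hθ]

open Real in
/-- For every `p ≥ 3` and `1 ≤ i ≤ p - 3`: `V_i(λ_p) ≥ λ_p`. -/
theorem chebyshev_ge_lambda (p : ℕ) (hp : 3 ≤ p) (i : ℕ) (hi1 : 1 ≤ i) (hi2 : i ≤ p - 3) :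
    lam p ≤ chebAux (i + 1) (lam p) := by
  have hip : i + 3 ≤ p := by omega
  have hp0 : (0:ℝ) < p := by positivity
  have hθpos : 0 < π / p := div_pos Real.pi_pos hp0
  have hθlt : π / p < π := by
    rw [div_lt_iff₀ hp0]
    nlinarith [Real.pi_pos, show (3:ℝ) ≤ p by exact_mod_cast hp]
  have hs : 0 < Real.sin (π / p) := Real.sin_pos_of_pos_of_lt_pi hθpos hθlt
  have h1 := cheb_sin (π / p) (i + 1)
  rw [show (2 : ℝ) * Real.cos (π / p) = lam p from rfl] at h1
  have h2 : lam p * Real.sin (π / p) = Real.sin (2 * (π / p)) := by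
    rw [Real.sin_two_mul, lam]; ring
  have key : Real.sin (2 * (π / p)) ≤ Real.sin ((i + 1 : ℕ) * (π / p)) := by
    push_cast
    apply sin_ge
    · push_cast; linarith [show (1:ℝ) ≤ i by exact_mod_cast hi1]
    · have : ((i:ℝ) + 3) ≤ p := by exact_mod_cast hip
      linarith
  rw [← h1, ← h2] at key
  exact le_of_mul_le_mul_right key hs
end

section
/- Let p ≥ 3 be an integer. The family defined by f_{i,j} = V_{j−i−1}(2·λ_p) for all integers i ≤ j is an infinite frieze pattern of type Λ_p; in particular f_{i,i} = 0, f_{i,i+1} = 1, f_{i,j} > 0 for j ≥ i+1, every quiddity entry equals 2·λ_p, and the unimodular rule f_{i,j}·f_{i+1,j+1} − f_{i,j+1}·f_{i+1,j} = 1 holds for all i ∈ ℤ and j ≥ i+1. -/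
/-- The constant frieze `f i j = V_{j-i-1}(2·λ_p)` (note `chebAux (j-i) = V_{j-i-1}`). -/
noncomputable def constFrieze (p : ℕ) (i j : ℤ) : ℝ := chebAux (j - i).toNat (2 * lam p)

lemma cheb_mono (x : ℝ) (hx : 2 ≤ x) (n : ℕ) :
    1 ≤ chebAux (n + 1) x ∧ chebAux (n + 1) x ≤ chebAux (n + 2) x := by
  induction n with
  | zero => simp [chebAux]; linarith
  | succ n ih =>
    obtain ⟨h1, h2⟩ := ih
    refine ⟨le_trans h1 h2, ?_⟩
    show chebAux (n + 2) x ≤ x * chebAux (n + 2) x - chebAux (n + 1) x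
    nlinarith

lemma cheb_det (x : ℝ) (n : ℕ) :
    chebAux (n + 1) x ^ 2 - chebAux (n + 2) x * chebAux n x = 1 := by
  induction n with
  | zero => simp [chebAux]
  | succ n ih =>
    have e1 : chebAux (n + 2) x = x * chebAux (n + 1) x - chebAux n x := rfl
    have e2 : chebAux (n + 3) x = x * chebAux (n + 2) x - chebAux (n + 1) x := rfl
    show chebAux (n + 2) x ^ 2 - chebAux (n + 3) x * chebAux (n + 1) x = 1
    rw [e2]; linear_combination ih + chebAux (n + 2) x * e1

/-- The family `f_{i,j} = V_{j-i-1}(2·λ_p)` is an infinite frieze pattern of type `Λ_p`: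
`f_{i,i} = 0`, `f_{i,i+1} = 1`, positivity for `j ≥ i+1`, the unimodular rule, every quiddity
entry equals `2·λ_p`, and each quiddity entry is a positive integral multiple of `λ_p`. -/
theorem constFrieze_is_infinite_frieze_of_type (p : ℕ) (hp : 3 ≤ p) :
    (∀ i : ℤ, constFrieze p i i = 0) ∧
    (∀ i : ℤ, constFrieze p i (i + 1) = 1) ∧
    (∀ i j : ℤ, i + 1 ≤ j → 0 < constFrieze p i j) ∧
    (∀ i j : ℤ, i + 1 ≤ j →
      constFrieze p i j * constFrieze p (i + 1) (j + 1)
        - constFrieze p i (j + 1) * constFrieze p (i + 1) j = 1) ∧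
    (∀ i : ℤ, constFrieze p i (i + 2) = 2 * lam p) ∧
    (∀ i : ℤ, ∃ n : ℕ, 0 < n ∧ constFrieze p i (i + 2) = n * lam p) := by
  have hp0 : (0:ℝ) < p := by positivity
  have hx : (2:ℝ) ≤ 2 * lam p := by
    have hcos : (1:ℝ)/2 ≤ Real.cos (Real.pi / p) := by
      have h3 : Real.pi / p ≤ Real.pi / 3 := by
        apply div_le_div_of_nonneg_left Real.pi_pos.le (by norm_num) (by exact_mod_cast hp)
      calc (1:ℝ)/2 = Real.cos (Real.pi / 3) := by rw [Real.cos_pi_div_three]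
        _ ≤ Real.cos (Real.pi / p) := by
          apply Real.cos_le_cos_of_nonneg_of_le_pi (by positivity) _ h3
          linarith [Real.pi_pos]
    unfold lam; linarith
  set x := 2 * lam p with hxdef
  have key : ∀ i j : ℤ, i + 1 ≤ j → ∃ n : ℕ, j = i + 1 + n := by
    intro i j h
    obtain ⟨n, hn⟩ := Int.le.dest h
    exact ⟨n, by omega⟩
  have tn : ∀ (i : ℤ) (n : ℕ), ((i + n) - i).toNat = n := by intro i n; omega
  refine ⟨?_, ?_, ?_, ?_, ?_, ?_⟩
  · intro i; simp [constFrieze, chebAux]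
  · intro i
    have : ((i + 1) - i).toNat = 1 := by omega
    simp [constFrieze, this, chebAux]
  · intro i j h
    obtain ⟨n, rfl⟩ := key i j h
    have : ((i + 1 + n) - i).toNat = n + 1 := by omega
    rw [constFrieze, this]
    have := cheb_mono x hx n
    linarith [this.1]
  · intro i j h
    obtain ⟨n, rfl⟩ := key i j h
    have e1 : ((i + 1 + n) - i).toNat = n + 1 := by omega
    have e2 : ((i + 1 + n + 1) - (i + 1)).toNat = n + 1 := by omega
    have e3 : ((i + 1 + n + 1) - i).toNat = n + 2 := by omega
    have e4 : ((i + 1 + n) - (i + 1)).toNat = n := by omega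
    rw [constFrieze, constFrieze, constFrieze, constFrieze, e1, e2, e3, e4]
    have := cheb_det x n
    nlinarith
  · intro i
    have : ((i + 2) - i).toNat = 2 := by omega
    rw [constFrieze, this]
    show x * chebAux 1 x - chebAux 0 x = x
    simp [chebAux]
  · intro i
    refine ⟨2, by norm_num, ?_⟩
    have : ((i + 2) - i).toNat = 2 := by omega
    rw [constFrieze, this]
    show x * chebAux 1 x - chebAux 0 x = 2 * lam p
    simp [chebAux, hxdef]
end

section
/- Let f = (f_{i,j}) be an infinite frieze pattern. Then for all integers i < j < k < ℓ the Ptolemy relation f_{i,k}·f_{j,ℓ} = f_{i,j}·f_{k,ℓ} + f_{i,ℓ}·f_{j,k} holds. -/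
/-- An infinite frieze pattern: `f i i = 0`, `f i (i+1) = 1`, the entries `f i j` for
`j ≥ i+1` are positive, and every diamond satisfies the unimodular rule. -/
def IsInfFrieze (f : ℤ → ℤ → ℝ) : Prop :=
  (∀ i : ℤ, f i i = 0) ∧
  (∀ i : ℤ, f i (i + 1) = 1) ∧
  (∀ i j : ℤ, i + 1 ≤ j → 0 < f i j) ∧
  (∀ i j : ℤ, i + 1 ≤ j → f i j * f (i + 1) (j + 1) - f i (j + 1) * f (i + 1) j = 1)

theorem infFrieze_rec (f : ℤ → ℤ → ℝ) (hf : IsInfFrieze f) :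
    ∀ i k : ℤ, i + 1 ≤ k → f i (k + 1) = f i k * f (k - 1) (k + 1) - f i (k - 1) := by
  obtain ⟨h0, h1, hpos, hd⟩ := hf
  have recL : ∀ n : ℕ, ∀ k : ℤ, f (k - 1 - n) (k + 1) =
      f (k - 1 - n) k * f (k - 1) (k + 1) - f (k - 1 - n) (k - 1) := by
    intro n
    induction n with
    | zero =>
      intro k
      have e1 : f (k - 1) k = 1 := by
        have := h1 (k - 1); rwa [show k - 1 + 1 = k by ring] at this
      have e0 : f (k - 1) (k - 1) = 0 := h0 (k - 1)
      push_cast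
      rw [sub_zero, e1, e0]; ring
    | succ n ih =>
      intro k
      have c1 : ((n + 1 : ℕ) : ℤ) = (n : ℤ) + 1 := by push_cast; ring
      rw [c1]
      set i : ℤ := k - 1 - ((n : ℤ) + 1) with hi
      have hik : i + 1 = k - 1 - n := by rw [hi]; ring
      have d1 := hd i k (by omega)
      have d2 := hd i (k - 1) (by omega)
      rw [show k - 1 + 1 = k by ring] at d2
      have ihk := ih k
      rw [← hik] at ihk
      have pos : 0 < f (i + 1) k := hpos (i + 1) k (by omega)
      have key : f i (k + 1) * f (i + 1) k =
          (f i k * f (k - 1) (k + 1) - f i (k - 1)) * f (i + 1) k := by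
        linear_combination (-1) * d1 + d2 + f i k * ihk
      exact mul_right_cancel₀ (ne_of_gt pos) key
  intro i k h
  have := recL (k - 1 - i).toNat k
  rwa [Int.toNat_of_nonneg (by omega), show k - 1 - (k - 1 - i) = i by ring] at this

theorem infFrieze_det (f : ℤ → ℤ → ℝ) (hf : IsInfFrieze f) :
    ∀ i j k : ℤ, i ≤ j → j ≤ k → f i k * f j (k + 1) - f i (k + 1) * f j k = f i j := by
  obtain ⟨h0, h1, hpos, hd⟩ := hf
  have G : ∀ (i j : ℤ), i ≤ j → ∀ n : ℕ,
      f i (j + n) * f j (j + n + 1) - f i (j + n + 1) * f j (j + n) = f i j := by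
    intro i j hijle n
    induction n with
    | zero =>
      push_cast
      rw [add_zero, h1 j, h0 j]; ring
    | succ n ih =>
      have c1 : ((n + 1 : ℕ) : ℤ) = (n : ℤ) + 1 := by push_cast; ring
      rw [c1]
      set k : ℤ := j + n with hk
      rw [show j + ((n : ℤ) + 1) = k + 1 by rw [hk]; ring,
        show k + 1 + 1 = k + 2 by ring]
      have r1 : f i (k + 2) = f i (k + 1) * f k (k + 2) - f i k := by
        have := infFrieze_rec f ⟨h0, h1, hpos, hd⟩ i (k + 1) (by omega)
        rwa [show k + 1 - 1 = k by ring, show k + 1 + 1 = k + 2 by ring] at this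
      have r2 : f j (k + 2) = f j (k + 1) * f k (k + 2) - f j k := by
        have := infFrieze_rec f ⟨h0, h1, hpos, hd⟩ j (k + 1) (by omega)
        rwa [show k + 1 - 1 = k by ring, show k + 1 + 1 = k + 2 by ring] at this
      rw [r1, r2]
      linear_combination ih
  intro i j k hij hjk
  have := G i j hij (k - j).toNat
  rwa [Int.toNat_of_nonneg (by omega), show j + (k - j) = k by ring] at this

/-- Ptolemy relations for infinite frieze patterns. -/
theorem infFrieze_ptolemy (f : ℤ → ℤ → ℝ) (hf : IsInfFrieze f)
    (i j k l : ℤ) (hij : i < j) (hjk : j < k) (hkl : k < l) :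
    f i k * f j l = f i j * f k l + f i l * f j k := by
  obtain ⟨h0, h1, hpos, hd⟩ := hf
  have Q : ∀ n : ℕ, (f i k * f j (k + n) = f i j * f k (k + n) + f i (k + n) * f j k) ∧
      (f i k * f j (k + n + 1) = f i j * f k (k + n + 1) + f i (k + n + 1) * f j k) := by
    intro n
    induction n with
    | zero =>
      constructor
      · push_cast; rw [add_zero, h0 k]; ring
      · push_cast
        rw [add_zero, h1 k]
        have := infFrieze_det f ⟨h0, h1, hpos, hd⟩ i j k (by omega) (by omega)
        linear_combination this
    | succ n ih =>
      obtain ⟨q1, q2⟩ := ih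
      have c1 : ((n + 1 : ℕ) : ℤ) = (n : ℤ) + 1 := by push_cast; ring
      rw [c1]
      set m : ℤ := k + n + 1 with hm
      rw [show k + ((n : ℤ) + 1) = m by rw [hm]; ring,
        show m + 1 = m + 1 from rfl]
      refine ⟨q2, ?_⟩
      have r : ∀ x : ℤ, x + 1 ≤ m → f x (m + 1) = f x m * f (m - 1) (m + 1) - f x (m - 1) :=
        fun x hx => infFrieze_rec f ⟨h0, h1, hpos, hd⟩ x m hx
      have ri := r i (by omega)
      have rj := r j (by omega)
      have rk := r k (by omega)
      have hm1 : m - 1 = k + n := by rw [hm]; ring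
      rw [hm1] at ri rj rk
      rw [ri, rj, rk]
      linear_combination f (k + (n : ℤ)) (m + 1) * q2 - q1
  have hQ := (Q (l - k).toNat).1
  rwa [Int.toNat_of_nonneg (by omega), show k + (l - k) = l by ring] at hQ
end

section
/- Let f = (f_{i,j}) be an infinite frieze pattern and let i, j be integers with j ≥ i+2 and f_{i,j} = 1. Then for every integer m with i+1 ≤ m ≤ j−2 one has f_{m,j}·f_{i,m+1} − f_{i,m}·f_{m+1,j} = 1; consequently the triangular array of entries f_{a,b} with i ≤ a ≤ b ≤ j is a fundamental domain of a (finite) Coxeter frieze pattern. -/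
namespace InfFriezeAux

variable {f : ℤ → ℤ → ℝ}

/-- Both components of the three-term relation, with coefficient a priori depending on `a`. -/
lemma compA (hf : IsInfFrieze f) (a j : ℤ) (h : a + 2 ≤ j) :
    (f a (j+1) + f a (j-1)
      = (f a (j-1) * f (a+1) (j+1) - f (a+1) (j-1) * f a (j+1)) * f a j) ∧
    (f (a+1) (j+1) + f (a+1) (j-1)
      = (f a (j-1) * f (a+1) (j+1) - f (a+1) (j-1) * f a (j+1)) * f (a+1) j) := by
  have D1 := hf.2.2.2 a (j-1) (by linarith)
  have hj : j - 1 + 1 = j := by ring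
  rw [hj] at D1
  have D2 := hf.2.2.2 a j (by linarith)
  constructor
  · linear_combination (-(f a (j+1))) * D1 - (f a (j-1)) * D2
  · linear_combination (-(f (a+1) (j+1))) * D1 - (f (a+1) (j-1)) * D2

/-- The coefficient of the three-term relation is independent of the row `a`. -/
lemma coefB (hf : IsInfFrieze f) : ∀ n : ℕ, ∀ a j : ℤ, a + 2 + (n : ℤ) = j →
    f a (j-1) * f (a+1) (j+1) - f (a+1) (j-1) * f a (j+1) = f (j-1) (j+1) := by
  intro n
  induction n with
  | zero =>
      intro a j hj
      push_cast at hj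
      have ha : j = a + 2 := by linarith
      subst ha
      have e1 : a + 2 - 1 = a + 1 := by ring
      rw [e1, hf.2.1 a, hf.1 (a+1)]
      ring
  | succ n ih =>
      intro a j hj
      push_cast at hj
      have h2 : (a+1) + 2 + (n : ℤ) = j := by linarith
      have hC' := ih (a+1) j h2
      have hA := (compA hf a j (by linarith)).2
      have hA' := (compA hf (a+1) j (by linarith)).1
      have hpos : 0 < f (a+1) j := hf.2.2.1 (a+1) j (by linarith)
      have := hA.symm.trans hA'
      have hcoef : f a (j-1) * f (a+1) (j+1) - f (a+1) (j-1) * f a (j+1)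
          = f (a+1) (j-1) * f (a+1+1) (j+1) - f (a+1+1) (j-1) * f (a+1) (j+1) := by
        have := mul_right_cancel₀ (ne_of_gt hpos) this
        linarith [this]
      rw [hcoef]
      exact hC'

/-- Three-term recurrence for the columns of an infinite frieze. -/
lemma rec3 (hf : IsInfFrieze f) (a j : ℤ) (h : a + 1 ≤ j) :
    f a (j+1) = f (j-1) (j+1) * f a j - f a (j-1) := by
  rcases eq_or_lt_of_le h with heq | hlt
  · have ha : a = j - 1 := by linarith
    subst ha
    have h0 : f (j-1) (j-1) = 0 := hf.1 _
    have h1 : f (j-1) (j-1+1) = 1 := hf.2.1 _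
    have e2 : j - 1 + 1 = j := by ring
    rw [e2] at h1
    rw [h0, h1]; ring
  · have h2 : a + 2 ≤ j := by linarith
    obtain ⟨n, hn⟩ := Int.le.dest h2
    have hB := coefB hf n a j (by linarith)
    have hA := (compA hf a j h2).1
    rw [hB] at hA
    linarith

/-- The Ptolemy-type relation `f i j = f m j * f i (m+1) - f i m * f (m+1) j`. -/
lemma ptolemy (hf : IsInfFrieze f) :
    ∀ n : ℕ, ∀ i m j : ℤ, i ≤ m → m + 1 + (n : ℤ) = j →
      f i j = f m j * f i (m+1) - f i m * f (m+1) j := by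
  intro n
  induction n using Nat.strong_induction_on with
  | _ n ih =>
    match n with
    | 0 =>
      intro i m j him hj
      push_cast at hj
      have : j = m + 1 := by linarith
      subst this
      rw [hf.2.1 m, hf.1 (m+1)]; ring
    | 1 =>
      intro i m j him hj
      push_cast at hj
      have : j = m + 2 := by linarith
      subst this
      have R := rec3 hf i (m+1) (by linarith)
      have e1 : m + 1 + 1 = m + 2 := by ring
      have e2 : m + 1 - 1 = m := by ring
      rw [e1, e2] at R
      have h1 : f (m+1) (m+1+1) = 1 := hf.2.1 (m+1)
      rw [e1] at h1
      rw [R, h1]; ring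
    | (n+2) =>
      intro i m j him hj
      push_cast at hj
      have e1 : j - 1 + 1 = j := by ring
      have e2 : j - 1 - 1 = j - 2 := by ring
      have Ri := rec3 hf i (j-1) (by linarith)
      have Rm := rec3 hf m (j-1) (by linarith)
      have Rm1 := rec3 hf (m+1) (j-1) (by linarith)
      rw [e1, e2] at Ri Rm Rm1
      have IH1 := ih (n+1) (by omega) i m (j-1) him (by push_cast; linarith)
      have IH2 := ih n (by omega) i m (j-2) him (by push_cast; linarith)
      linear_combination Ri - f i (m+1) * Rm + f i m * Rm1
        + f (j-2) j * IH1 - IH2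

end InfFriezeAux

/-- If `f_{i,j} = 1` (with `j ≥ i+2`) then for every `i+1 ≤ m ≤ j-2` one has
`f_{m,j}·f_{i,m+1} - f_{i,m}·f_{m+1,j} = 1`; this says that the triangle below `f_{i,j}`
is a fundamental domain of a finite Coxeter frieze pattern. -/
theorem infFrieze_one_gives_fundamental_domain (f : ℤ → ℤ → ℝ) (hf : IsInfFrieze f)
    (i j : ℤ) (hij : i + 2 ≤ j) (h1 : f i j = 1) :
    ∀ m : ℤ, i + 1 ≤ m → m ≤ j - 2 →
      f m j * f i (m + 1) - f i m * f (m + 1) j = 1 := by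
  intro m hm1 hm2
  obtain ⟨n, hn⟩ := Int.le.dest (show m + 1 ≤ j by linarith)
  have := InfFriezeAux.ptolemy hf n i m j (by linarith) (by linarith)
  rw [h1] at this
  linarith
end

section
/- Let (q_i)_{i∈ℤ} be any doubly infinite sequence of real numbers and let (f_{i,j}) be the associated propagation array. Then for all integers i ≤ j ≤ k ≤ ℓ the Ptolemy relation f_{i,k}·f_{j,ℓ} = f_{i,ℓ}·f_{j,k} + f_{i,j}·f_{k,ℓ} holds. -/
/-- `f` is the propagation array associated with the sequence `q`: `f i i = 0`,
`f i (i+1) = 1` and `f i (j+1) = q (j-1) * f i j - f i (j-1)` for `j ≥ i+1`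
(in particular `f i (i+2) = q i`). -/
def IsPropagationArray (q : ℤ → ℝ) (f : ℤ → ℤ → ℝ) : Prop :=
  (∀ i : ℤ, f i i = 0) ∧
  (∀ i : ℤ, f i (i + 1) = 1) ∧
  (∀ i j : ℤ, i + 1 ≤ j → f i (j + 1) = q (j - 1) * f i j - f i (j - 1))

lemma propagation_rec (q : ℤ → ℝ) (f : ℤ → ℤ → ℝ) (h : IsPropagationArray q f)
    (i m : ℤ) (him : i ≤ m) : f i (m + 2) = q m * f i (m + 1) - f i m := by
  have := h.2.2 i (m + 1) (by omega)
  simpa [add_sub_cancel_right, show m + 1 + 1 = m + 2 by ring] using this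

lemma propagation_wronskian (q : ℤ → ℝ) (f : ℤ → ℤ → ℝ) (h : IsPropagationArray q f)
    (i j : ℤ) (hij : i ≤ j) :
    ∀ k, j ≤ k → f i (k + 1) * f j k - f i k * f j (k + 1) = -(f i j) := by
  refine Int.le_induction ?_ ?_
  · rw [h.1 j, h.2.1 j]; ring
  · intro k hk ih
    have hi : f i (k + 2) = q k * f i (k + 1) - f i k :=
      propagation_rec q f h i k (le_trans hij hk)
    have hj : f j (k + 2) = q k * f j (k + 1) - f j k :=
      propagation_rec q f h j k hk
    rw [show k + 1 + 1 = k + 2 by ring, hi, hj]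
    linear_combination ih

/-- Ptolemy relations for propagation arrays. -/
theorem propagationArray_ptolemy (q : ℤ → ℝ) (f : ℤ → ℤ → ℝ)
    (h : IsPropagationArray q f) (i j k l : ℤ) (hij : i ≤ j) (hjk : j ≤ k) (hkl : k ≤ l) :
    f i k * f j l = f i l * f j k + f i j * f k l := by
  have key : ∀ l, k ≤ l →
      (f i k * f j l = f i l * f j k + f i j * f k l) ∧
      (f i k * f j (l + 1) = f i (l + 1) * f j k + f i j * f k (l + 1)) := by
    refine Int.le_induction ?_ ?_
    · constructor
      · rw [h.1 k]; ring
      · have hw := propagation_wronskian q f h i j hij k hjk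
        rw [h.2.1 k]; linarith
    · rintro m hm ⟨h0, h1⟩
      refine ⟨h1, ?_⟩
      have hi : f i (m + 2) = q m * f i (m + 1) - f i m :=
        propagation_rec q f h i m (le_trans (le_trans hij hjk) hm)
      have hj : f j (m + 2) = q m * f j (m + 1) - f j m :=
        propagation_rec q f h j m (le_trans hjk hm)
      have hk2 : f k (m + 2) = q m * f k (m + 1) - f k m :=
        propagation_rec q f h k m hm
      rw [show m + 1 + 1 = m + 2 by ring, hi, hj, hk2]
      linear_combination (q m) * h1 - h0
  exact (key l hkl).1
end

section
/- Let p ≥ 3 be an integer and let f = (f_{i,j}) be an infinite frieze pattern of type Λ_p. Then every entry f_{i,j} with i < j satisfies f_{i,j} = 1 or f_{i,j} ≥ λ_p; that is, all entries belong to the set {1} ∪ [λ_p, ∞). -/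
/-- The frieze pattern is of type `Λ_p`: every quiddity entry is a positive integral
multiple of `λ_p`. -/
def IsTypeLambda (p : ℕ) (f : ℤ → ℤ → ℝ) : Prop :=
  ∀ i : ℤ, ∃ n : ℕ, 0 < n ∧ f i (i + 2) = n * lam p

/-!
An entry `f i j` is the continuant of the quiddity word `c_i ⋯ c_{j-2}` (with `c_k = f k (k + 2)`),
and every infix of that word has positive continuant. Put `λ = λ_{q+3}`. The continuants of the
runs `λ^n` are Chebyshev values `sin ((n + 1) π / (q + 3)) / sin (π / (q + 3))`; they vanish for
`n = q + 2`, so a positive word has no run `λ^(q+2)`, and the matrix of a run `λ^(q+1)` is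
`[[1, 0], [λ, 1]] * [[1, -λ], [0, 1]]`. Hence a maximal run `λ^(q+1)` can be cut out of the word,
lowering each neighbour (necessarily a multiple `≥ 2λ`) by `λ`: the result is a shorter positive
word in positive multiples of `λ` with the same continuant. A word with no run `λ^(q+1)` either is
a run `λ^m` with `m ≤ q`, of continuant `1` or `≥ λ`, or contains a letter `≥ 2λ`; in the latter
case reading the word from the right shows that its continuant is at least `λ` times the Chebyshev
value of its leading run.
-/

namespace Frieze

open Real List

/-- `cheb l (n + 1) = U_n (l / 2)`, where `U_n` is the Chebyshev polynomial of the second kind. -/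
noncomputable def cheb (l : ℝ) : ℕ → ℝ
  | 0 => 0
  | 1 => 1
  | n + 2 => l * cheb l (n + 1) - cheb l n

@[simp] lemma cheb_zero (l : ℝ) : cheb l 0 = 0 := rfl

@[simp] lemma cheb_one (l : ℝ) : cheb l 1 = 1 := rfl

lemma cheb_add_two (l : ℝ) (n : ℕ) : cheb l (n + 2) = l * cheb l (n + 1) - cheb l n := rfl

@[simp] lemma cheb_two (l : ℝ) : cheb l 2 = l := by simp [cheb_add_two]

lemma cheb_two_mul_cos_mul_sin (θ : ℝ) (n : ℕ) :
    cheb (2 * cos θ) n * sin θ = sin (n * θ) := by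
  induction n using Nat.twoStepInduction with
  | zero => simp
  | one => simp
  | more n ih₀ ih₁ =>
    have e₀ : (n : ℝ) * θ = ((n + 1 : ℕ) : ℝ) * θ - θ := by push_cast; ring
    have e₂ : ((n + 2 : ℕ) : ℝ) * θ = ((n + 1 : ℕ) : ℝ) * θ + θ := by push_cast; ring
    rw [cheb_add_two, sub_mul, mul_assoc, ih₀, ih₁, e₀, e₂, sin_sub, sin_add]
    ring

lemma sin_le_sin_of_le_of_le_pi_sub {c x : ℝ} (hc : 0 ≤ c) (hcx : c ≤ x) (hx : x ≤ π - c) :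
    sin c ≤ sin x := by
  rcases le_or_gt x (π / 2) with h | h
  · exact sin_le_sin_of_le_of_le_pi_div_two (by linarith) h hcx
  · rw [← sin_pi_sub x]
    exact sin_le_sin_of_le_of_le_pi_div_two (by linarith [pi_pos]) (by linarith) (by linarith)

lemma sin_mul_le_cheb_mul_sin {p k n : ℕ} (hp : 0 < p) (hkn : k ≤ n) (hnp : n + k ≤ p) :
    sin (k * (π / p)) ≤ cheb (2 * cos (π / p)) n * sin (π / p) := by
  have hpθ : (p : ℝ) * (π / p) = π := by field_simp
  rw [cheb_two_mul_cos_mul_sin]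
  have hkn' : (k : ℝ) ≤ n := by exact_mod_cast hkn
  have hnp' : (n : ℝ) + k ≤ p := by exact_mod_cast hnp
  apply sin_le_sin_of_le_of_le_pi_sub (by positivity) (by gcongr)
  nlinarith [show 0 < π / p by positivity]

/-- The properties of `l = λ_{q+3}` (see `chebBounds_lam`) that the combinatorial argument uses. -/
structure ChebBounds (l : ℝ) (q : ℕ) : Prop where
  le_two : l ≤ 2
  cheb_q_add_three : cheb l (q + 3) = 0
  cheb_q_add_two : cheb l (q + 2) = 1
  one_le_cheb : ∀ n, 1 ≤ n → n ≤ q + 2 → 1 ≤ cheb l n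
  le_cheb : ∀ n, 2 ≤ n → n ≤ q + 1 → l ≤ cheb l n

theorem chebBounds_lam (q : ℕ) : ChebBounds (lam (q + 3)) q := by
  set θ := π / (q + 3 : ℕ) with hθ
  have hsin : 0 < sin θ :=
    sin_pos_of_pos_of_lt_pi (by positivity) (div_lt_self pi_pos (by push_cast; linarith))
  have hpθ : ((q + 3 : ℕ) : ℝ) * θ = π := by rw [hθ]; field_simp
  have key := cheb_two_mul_cos_mul_sin θ
  change ChebBounds (2 * cos θ) q
  refine ⟨by linarith [cos_le_one θ], ?_, ?_, ?_, ?_⟩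
  · rw [← mul_left_inj' hsin.ne', key, hpθ, sin_pi, zero_mul]
  · have e : ((q + 2 : ℕ) : ℝ) * θ = ((q + 3 : ℕ) : ℝ) * θ - θ := by push_cast; ring
    rw [← mul_left_inj' hsin.ne', key, e, hpθ, sin_pi_sub, one_mul]
  · intro n hn₁ hn₂
    have h := sin_mul_le_cheb_mul_sin (k := 1) (p := q + 3) (by omega) hn₁ (by omega)
    rw [Nat.cast_one, one_mul] at h
    exact le_of_mul_le_mul_right (by linarith) hsin
  · intro n hn₁ hn₂
    have h := sin_mul_le_cheb_mul_sin (k := 2) (p := q + 3) (by omega) hn₁ (by omega)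
    rw [Nat.cast_ofNat, sin_two_mul] at h
    exact le_of_mul_le_mul_right (by linarith) hsin

namespace ChebBounds

variable {l : ℝ} {q : ℕ}

lemma one_le (hb : ChebBounds l q) : 1 ≤ l := by
  simpa using hb.one_le_cheb 2 (by norm_num) (by omega)

lemma cheb_nonneg (hb : ChebBounds l q) {n : ℕ} (hn : n ≤ q + 3) : 0 ≤ cheb l n := by
  rcases Nat.eq_zero_or_pos n with rfl | hn₀
  · simp
  rcases hn.eq_or_lt with rfl | hn'
  · rw [hb.cheb_q_add_three]
  · linarith [hb.one_le_cheb n hn₀ (by omega)]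

lemma cheb_q_add_one (hb : ChebBounds l q) : cheb l (q + 1) = l := by
  have h := cheb_add_two l (q + 1)
  rw [hb.cheb_q_add_three, hb.cheb_q_add_two] at h
  linarith

lemma cheb_q (hb : ChebBounds l q) : cheb l q = l ^ 2 - 1 := by
  have h := cheb_add_two l q
  rw [hb.cheb_q_add_two, hb.cheb_q_add_one] at h
  linarith

end ChebBounds

def contMat (x : ℝ) : Matrix (Fin 2) (Fin 2) ℝ := !![x, -1; 1, 0]

noncomputable def contProd (w : List ℝ) : Matrix (Fin 2) (Fin 2) ℝ := (w.map contMat).prod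

/-- The continuant `K(x₁, …, xₙ)` of `w = [x₁, …, xₙ]`: the numerator of the continued fraction
`x₁ - 1 / (x₂ - 1 / (⋯ - 1 / xₙ))`. -/
noncomputable def cont (w : List ℝ) : ℝ := contProd w 0 0

/-- The continuant `K(x₂, …, xₙ)` of the tail of `w = [x₁, …, xₙ]`, and `0` when `w = []`. -/
noncomputable def contTail (w : List ℝ) : ℝ := contProd w 1 0

@[simp] lemma contProd_nil : contProd [] = 1 := rfl

@[simp] lemma contProd_cons (x : ℝ) (w : List ℝ) : contProd (x :: w) = contMat x * contProd w :=
  prod_cons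

@[simp] lemma contProd_append (u v : List ℝ) : contProd (u ++ v) = contProd u * contProd v := by
  simp [contProd]

@[simp] lemma cont_nil : cont [] = 1 := by simp [cont]

@[simp] lemma contTail_nil : contTail [] = 0 := by simp [contTail]

lemma cont_cons (x : ℝ) (w : List ℝ) : cont (x :: w) = x * cont w - contTail w := by
  simp [cont, contTail, contMat, Matrix.mul_apply, Fin.sum_univ_two]
  ring

lemma contTail_cons (x : ℝ) (w : List ℝ) : contTail (x :: w) = cont w := by
  simp [cont, contTail, contMat, Matrix.mul_apply, Fin.sum_univ_two]

lemma contProd_replicate_succ (l : ℝ) (n : ℕ) :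
    contProd (replicate (n + 1) l) =
      !![cheb l (n + 2), -cheb l (n + 1); cheb l (n + 1), -cheb l n] := by
  induction n with
  | zero => ext i j; fin_cases i <;> fin_cases j <;> simp [contMat]
  | succ n ih =>
    rw [replicate_succ, contProd_cons, ih]
    ext i j
    fin_cases i <;> fin_cases j <;> simp [contMat, cheb_add_two] <;> ring

lemma cont_replicate (l : ℝ) (n : ℕ) : cont (replicate n l) = cheb l (n + 1) := by
  cases n with
  | zero => simp
  | succ n => simp [cont, contProd_replicate_succ]

lemma contTail_replicate (l : ℝ) (n : ℕ) : contTail (replicate n l) = cheb l n := by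
  cases n with
  | zero => simp
  | succ n => simp [contTail, contProd_replicate_succ]

lemma contMat_mul_lower (a l : ℝ) : contMat a * !![1, 0; l, 1] = contMat (a - l) := by
  ext i j
  fin_cases i <;> fin_cases j <;> simp [contMat]
  ring

lemma upper_mul_contMat (b l : ℝ) : !![1, -l; 0, 1] * contMat b = contMat (b - l) := by
  ext i j
  fin_cases i <;> fin_cases j <;> simp [contMat]
  ring

lemma lower_mul_apply_zero_zero (l : ℝ) (M : Matrix (Fin 2) (Fin 2) ℝ) :
    (!![1, 0; l, 1] * M) 0 0 = M 0 0 := by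
  simp [Matrix.mul_apply, Fin.sum_univ_two]

lemma mul_upper_apply_zero_zero (l : ℝ) (M : Matrix (Fin 2) (Fin 2) ℝ) :
    (M * !![1, -l; 0, 1]) 0 0 = M 0 0 := by
  simp [Matrix.mul_apply, Fin.sum_univ_two]

def InfixPositive (w : List ℝ) : Prop := ∀ t, t <:+: w → 0 < cont t

lemma InfixPositive.mono {w w' : List ℝ} (hw : InfixPositive w) (h : w' <:+: w) :
    InfixPositive w' :=
  fun t ht => hw t (ht.trans h)

lemma InfixPositive.of_lift {w w' : List ℝ} (hw : InfixPositive w)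
    (h : ∀ t, t <:+: w' → ∃ s, s <:+: w ∧ cont s = cont t) : InfixPositive w' := by
  intro t ht
  obtain ⟨s, hs, he⟩ := h t ht
  exact he ▸ hw s hs

def IsPosMul (l x : ℝ) : Prop := ∃ n : ℕ, 0 < n ∧ x = n * l

lemma IsPosMul.sub_self {l x : ℝ} (hx : IsPosMul l x) (hxl : x ≠ l) : IsPosMul l (x - l) := by
  obtain ⟨n, hn, rfl⟩ := hx
  have : n ≠ 1 := by rintro rfl; simp at hxl
  exact ⟨n - 1, by omega, by rw [Nat.cast_sub (by omega)]; ring⟩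

lemma IsPosMul.two_mul_le {l x : ℝ} (hl : 0 ≤ l) (hx : IsPosMul l x) (hxl : x ≠ l) :
    2 * l ≤ x := by
  obtain ⟨n, hn, he⟩ := hx.sub_self hxl
  have : (1 : ℝ) ≤ n := by exact_mod_cast hn
  nlinarith

lemma le_of_replicate_prefix {α : Type*} {a : α} {t q : ℕ} {w : List α}
    (h : replicate t a <+: w) (hrun : ¬ replicate (q + 1) a <:+: w) : t ≤ q := by
  by_contra! ht
  refine hrun (IsInfix.trans ?_ h.isInfix)
  exact (prefix_replicate_iff.mpr ⟨by simpa using ht, by simp⟩).isInfix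

/-- Used with `t` the length of the leading run of letters `l` of `w`; the second inequality says
that the continued fraction `cont w / contTail w` is at least that of `replicate (t + 1) l`. -/
def ContBound (l : ℝ) (t : ℕ) (w : List ℝ) : Prop :=
  l * cheb l (t + 2) ≤ cont w ∧ cheb l (t + 2) * contTail w ≤ cheb l (t + 1) * cont w

namespace ChebBounds

variable {l : ℝ} {q : ℕ}

/-- The lower and upper unitriangular factors shift the neighbouring letters of the run by `-l`
(`contMat_mul_lower`, `upper_mul_contMat`). -/
lemma contProd_replicate (hb : ChebBounds l q) :
    contProd (replicate (q + 1) l) = !![1, 0; l, 1] * !![1, -l; 0, 1] := by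
  rw [contProd_replicate_succ, hb.cheb_q_add_two, hb.cheb_q_add_one, hb.cheb_q]
  ext i j
  fin_cases i <;> fin_cases j <;> simp
  ring

lemma contProd_cons_replicate_append (hb : ChebBounds l q) (a b : ℝ) :
    contProd (a :: (replicate (q + 1) l ++ [b])) = contProd [a - l, b - l] := by
  simp only [contProd_cons, contProd_append, contProd_nil, Matrix.mul_one, hb.contProd_replicate]
  rw [← Matrix.mul_assoc, ← Matrix.mul_assoc, contMat_mul_lower, Matrix.mul_assoc,
    upper_mul_contMat]

lemma cont_replicate_append (hb : ChebBounds l q) (b : ℝ) (v : List ℝ) :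
    cont (replicate (q + 1) l ++ b :: v) = cont ((b - l) :: v) := by
  simp only [cont, contProd_append, contProd_cons, hb.contProd_replicate]
  rw [Matrix.mul_assoc, ← Matrix.mul_assoc _ (contMat b), upper_mul_contMat,
    lower_mul_apply_zero_zero]

lemma cont_append_cons_replicate (hb : ChebBounds l q) (u : List ℝ) (a : ℝ) :
    cont (u ++ a :: replicate (q + 1) l) = cont (u ++ [a - l]) := by
  simp only [cont, contProd_append, contProd_cons, contProd_nil, hb.contProd_replicate,
    ← Matrix.mul_assoc, contMat_mul_lower, mul_upper_apply_zero_zero, Matrix.mul_one]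

lemma cont_append_cons_replicate_append (hb : ChebBounds l q) (u : List ℝ) (a b : ℝ)
    (v : List ℝ) :
    cont (u ++ a :: (replicate (q + 1) l ++ b :: v)) = cont (u ++ (a - l) :: (b - l) :: v) := by
  have e₁ : u ++ a :: (replicate (q + 1) l ++ b :: v) =
      u ++ (a :: (replicate (q + 1) l ++ [b])) ++ v := by simp
  have e₂ : u ++ (a - l) :: (b - l) :: v = u ++ [a - l, b - l] ++ v := by simp
  rw [cont, cont, e₁, e₂]
  simp only [contProd_append, hb.contProd_cons_replicate_append]

lemma infixPositive_cons_sub (hb : ChebBounds l q) {b : ℝ} {v : List ℝ}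
    (h : InfixPositive (replicate (q + 1) l ++ b :: v)) : InfixPositive ((b - l) :: v) := by
  refine h.of_lift fun t ht => ?_
  rcases infix_cons_iff.mp ht with ht | ht
  · rcases prefix_cons_iff.mp ht with rfl | ⟨r, rfl, ⟨y, rfl⟩⟩
    · exact ⟨[], nil_infix, rfl⟩
    · exact ⟨replicate (q + 1) l ++ b :: r, ⟨[], y, by simp⟩, hb.cont_replicate_append b r⟩
  · exact ⟨t, ht.trans ⟨replicate (q + 1) l ++ [b], [], by simp⟩, rfl⟩

lemma infixPositive_concat_sub (hb : ChebBounds l q) {u : List ℝ} {a : ℝ}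
    (h : InfixPositive (u ++ a :: replicate (q + 1) l)) : InfixPositive (u ++ [a - l]) := by
  refine h.of_lift fun t ht => ?_
  rcases infix_concat_iff.mp ht with ht | ht
  · rcases suffix_concat_iff.mp ht with rfl | ⟨s, rfl, ⟨x, rfl⟩⟩
    · exact ⟨[], nil_infix, rfl⟩
    · exact ⟨s ++ a :: replicate (q + 1) l, ⟨x, [], by simp⟩, hb.cont_append_cons_replicate s a⟩
  · exact ⟨t, ht.trans ⟨[], a :: replicate (q + 1) l, by simp⟩, rfl⟩

lemma infixPositive_append_sub_sub (hb : ChebBounds l q) {u v : List ℝ} {a b : ℝ}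
    (h : InfixPositive (u ++ a :: (replicate (q + 1) l ++ b :: v))) :
    InfixPositive (u ++ (a - l) :: (b - l) :: v) := by
  have hu : InfixPositive (u ++ [a - l]) :=
    hb.infixPositive_concat_sub (h.mono ⟨[], b :: v, by simp⟩)
  have hv : InfixPositive ((b - l) :: v) :=
    hb.infixPositive_cons_sub (h.mono ⟨u ++ [a], [], by simp⟩)
  intro t ht
  rw [show u ++ (a - l) :: (b - l) :: v = (u ++ [a - l]) ++ (b - l) :: v by simp] at ht
  rcases infix_append_iff.mp ht with ht | ht | ⟨t₁, t₂, rfl, h₁, h₂⟩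
  · exact hu t ht
  · exact hv t ht
  rcases suffix_concat_iff.mp h₁ with rfl | ⟨s, rfl, ⟨x, rfl⟩⟩
  · exact hv t₂ h₂.isInfix
  rcases prefix_cons_iff.mp h₂ with rfl | ⟨r, rfl, ⟨y, rfl⟩⟩
  · exact hu _ (by simpa using h₁.isInfix)
  rw [show s ++ [a - l] ++ (b - l) :: r = s ++ (a - l) :: (b - l) :: r by simp,
    ← hb.cont_append_cons_replicate_append]
  exact h _ ⟨x, y, by simp⟩

lemma not_replicate_infix (hb : ChebBounds l q) {w : List ℝ} (hw : InfixPositive w) :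
    ¬ replicate (q + 2) l <:+: w := by
  intro h
  have := hw _ h
  rw [cont_replicate, hb.cheb_q_add_three] at this
  exact this.false

lemma head?_ne_of_infixPositive (hb : ChebBounds l q) {u v : List ℝ}
    (hw : InfixPositive (u ++ replicate (q + 1) l ++ v)) : v.head? ≠ some l := by
  intro hv
  obtain ⟨v, rfl⟩ := head?_eq_some_iff.mp hv
  exact hb.not_replicate_infix hw ⟨u, v, by simp [replicate_succ']⟩

lemma exists_split_at_replicate (hb : ChebBounds l q) {w : List ℝ} (hw : InfixPositive w)
    (h : replicate (q + 1) l <:+: w) :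
    ∃ u v, w = u ++ replicate (q + 1) l ++ v ∧ u.getLast? ≠ some l ∧ v.head? ≠ some l := by
  obtain ⟨u, v, rfl⟩ := h
  induction u using reverseRecOn generalizing v with
  | nil => exact ⟨[], v, rfl, by simp, hb.head?_ne_of_infixPositive hw⟩
  | append_singleton u a ih =>
    by_cases ha : a = l
    · have e : u ++ [a] ++ replicate (q + 1) l ++ v = u ++ replicate (q + 1) l ++ l :: v := by
        rw [ha, append_assoc u, singleton_append, ← replicate_succ, replicate_succ']
        simp
      rw [e] at hw ⊢
      exact ih (l :: v) hw
    · exact ⟨u ++ [a], v, rfl, by simpa using ha, hb.head?_ne_of_infixPositive hw⟩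

theorem exists_shorter_of_replicate_infix (hb : ChebBounds l q) {w : List ℝ}
    (hw : InfixPositive w) (hx : ∀ x ∈ w, IsPosMul l x) (hR : replicate (q + 1) l <:+: w)
    (hne : w ≠ replicate (q + 1) l) :
    ∃ w', w'.length < w.length ∧ (∀ x ∈ w', IsPosMul l x) ∧ InfixPositive w' ∧
      cont w' = cont w := by
  obtain ⟨u, v, rfl, hu, hv⟩ := hb.exists_split_at_replicate hw hR
  rcases eq_nil_or_concat' u with rfl | ⟨u, a, rfl⟩ <;> rcases v with _ | ⟨b, v⟩
  · simp at hne
  · simp only [head?_cons, ne_eq, Option.some.injEq] at hv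
    simp only [nil_append, forall_mem_append, forall_mem_cons] at hx hw
    refine ⟨(b - l) :: v, by simp, ?_, hb.infixPositive_cons_sub hw,
      (hb.cont_replicate_append b v).symm⟩
    exact forall_mem_cons.2 ⟨hx.2.1.sub_self hv, hx.2.2⟩
  · simp only [getLast?_concat, ne_eq, Option.some.injEq] at hu
    simp only [append_nil, append_assoc, singleton_append, forall_mem_append, forall_mem_cons]
      at hx hw
    refine ⟨u ++ [a - l], by simp, ?_, hb.infixPositive_concat_sub hw,
      by simpa using (hb.cont_append_cons_replicate u a).symm⟩
    exact forall_mem_append.2 ⟨hx.1, forall_mem_singleton.2 (hx.2.1.sub_self hu)⟩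
  · simp only [head?_cons, getLast?_concat, ne_eq, Option.some.injEq] at hu hv
    simp only [append_assoc, cons_append, nil_append, forall_mem_append, forall_mem_cons] at hx hw
    refine ⟨u ++ (a - l) :: (b - l) :: v, by simp, ?_, hb.infixPositive_append_sub_sub hw,
      by simpa using (hb.cont_append_cons_replicate_append u a b v).symm⟩
    exact forall_mem_append.2 ⟨hx.1, forall_mem_cons.2 ⟨hx.2.1.sub_self hu,
      forall_mem_cons.2 ⟨hx.2.2.2.1.sub_self hv, hx.2.2.2.2⟩⟩⟩

lemma contBound_cons_self (hb : ChebBounds l q) {t : ℕ} {u : List ℝ}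
    (ht : t + 1 ≤ q) (h : ContBound l t u) : ContBound l (t + 1) (l :: u) := by
  obtain ⟨hA, hB⟩ := h
  have hS₂ : 0 < cheb l (t + 2) := by linarith [hb.one_le_cheb (t + 2) (by omega) (by omega)]
  have hS₃ : 0 ≤ cheb l (t + 3) := hb.cheb_nonneg (by omega)
  have hrec : cheb l (t + 3) = l * cheb l (t + 2) - cheb l (t + 1) := cheb_add_two l (t + 1)
  have key : cheb l (t + 3) * cont u ≤ cheb l (t + 2) * cont (l :: u) := by
    rw [cont_cons, hrec]
    linarith
  refine ⟨?_, by rwa [contTail_cons]⟩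
  refine le_of_mul_le_mul_left ?_ hS₂
  nlinarith [mul_le_mul_of_nonneg_left hA hS₃]

lemma contBound_cons (hb : ChebBounds l q) {t : ℕ} {u : List ℝ} {a : ℝ}
    (ht : t ≤ q) (h : ContBound l t u) (ha : 2 * l ≤ a) : ContBound l 0 (a :: u) := by
  obtain ⟨hA, hB⟩ := h
  have hl := hb.one_le
  have hS₂ : 1 ≤ cheb l (t + 2) := hb.one_le_cheb (t + 2) (by omega) (by omega)
  have hS₃ : 0 ≤ cheb l (t + 3) := hb.cheb_nonneg (by omega)
  have hrec : cheb l (t + 3) = l * cheb l (t + 2) - cheb l (t + 1) := cheb_add_two l (t + 1)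
  have hu : 0 ≤ cont u := by nlinarith
  have htail : contTail u ≤ l * cont u := by
    refine le_of_mul_le_mul_left ?_ (show 0 < cheb l (t + 2) by linarith)
    nlinarith
  have hcons : l * cont u ≤ cont (a :: u) := by
    rw [cont_cons]
    nlinarith
  simp only [ContBound, zero_add, cheb_two, cheb_one, one_mul, contTail_cons]
  exact ⟨by nlinarith, hcons⟩

lemma contBound_cons_replicate (hb : ChebBounds l q) {m : ℕ} {a : ℝ} (hm : m ≤ q)
    (ha : 2 * l ≤ a) : ContBound l 0 (a :: replicate m l) := by
  have hl := hb.one_le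
  have hS₁ : 0 ≤ cheb l (m + 1) := hb.cheb_nonneg (by omega)
  have hS₂ : 0 ≤ cheb l (m + 2) := hb.cheb_nonneg (by omega)
  have hcons : l * cheb l (m + 1) + cheb l (m + 2) ≤ cont (a :: replicate m l) := by
    rw [cont_cons, cont_replicate, contTail_replicate, cheb_add_two]
    nlinarith
  simp only [ContBound, zero_add, cheb_two, cheb_one, one_mul, contTail_cons, cont_replicate]
  refine ⟨?_, by linarith⟩
  rcases Nat.eq_zero_or_pos m with rfl | hm₀
  · simp only [zero_add, cheb_one, cheb_two] at hcons
    nlinarith [hb.le_two]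
  · nlinarith [hb.le_cheb (m + 1) (by omega) (by omega)]

lemma exists_contBound (hb : ChebBounds l q) {w : List ℝ}
    (hx : ∀ x ∈ w, IsPosMul l x) (hrun : ¬ replicate (q + 1) l <:+: w) (hne : ∃ x ∈ w, x ≠ l) :
    ∃ t, replicate t l <+: w ∧ ContBound l t w := by
  induction w with
  | nil => simp at hne
  | cons a u ih =>
    rw [forall_mem_cons] at hx
    have hrun_u : ¬ replicate (q + 1) l <:+: u := fun h => hrun (infix_cons h)
    have hl : 0 ≤ l := by linarith [hb.one_le]
    by_cases hu : ∃ x ∈ u, x ≠ l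
    · obtain ⟨t, htu, hB⟩ := ih hx.2 hrun_u hu
      by_cases ha : a = l
      · subst ha
        have hpre : replicate (t + 1) a <+: a :: u := by
          rw [replicate_succ]
          exact cons_prefix_cons.mpr ⟨rfl, htu⟩
        exact ⟨t + 1, hpre, hb.contBound_cons_self (le_of_replicate_prefix hpre hrun) hB⟩
      · exact ⟨0, nil_prefix, hb.contBound_cons (le_of_replicate_prefix htu hrun_u) hB
          (hx.1.two_mul_le hl ha)⟩
    · push Not at hu
      have ha : a ≠ l := by
        obtain ⟨x, hx', hxl⟩ := hne
        rcases mem_cons.mp hx' with rfl | hx'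
        · exact hxl
        · exact absurd (hu x hx') hxl
      have hrep : u = replicate u.length l := eq_replicate_iff.mpr ⟨rfl, hu⟩
      rw [hrep] at hrun_u ⊢
      exact ⟨0, nil_prefix, hb.contBound_cons_replicate
        (le_of_replicate_prefix (prefix_refl _) hrun_u) (hx.1.two_mul_le hl ha)⟩

theorem cont_eq_one_or_le_of_not_replicate_infix (hb : ChebBounds l q) {w : List ℝ}
    (hx : ∀ x ∈ w, IsPosMul l x) (hrun : ¬ replicate (q + 1) l <:+: w) :
    cont w = 1 ∨ l ≤ cont w := by
  by_cases hne : ∃ x ∈ w, x ≠ l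
  · obtain ⟨t, ht, hB, -⟩ := hb.exists_contBound hx hrun hne
    have := hb.one_le_cheb (t + 2) (by omega) (by linarith [le_of_replicate_prefix ht hrun])
    right
    nlinarith [hb.one_le]
  · push Not at hne
    have hrep : w = replicate w.length l := eq_replicate_iff.mpr ⟨rfl, hne⟩
    have hm := le_of_replicate_prefix (by rw [← hrep]) hrun
    rw [hrep, cont_replicate]
    rcases Nat.eq_zero_or_pos w.length with h | h
    · simp [h]
    · exact Or.inr (hb.le_cheb _ (by omega) (by omega))

theorem cont_eq_one_or_le (hb : ChebBounds l q) {w : List ℝ} (hx : ∀ x ∈ w, IsPosMul l x)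
    (hw : InfixPositive w) : cont w = 1 ∨ l ≤ cont w := by
  induction h : w.length using Nat.strong_induction_on generalizing w with
  | _ n ih =>
    by_cases hrun : replicate (q + 1) l <:+: w
    · by_cases hR : w = replicate (q + 1) l
      · rw [hR, cont_replicate, hb.cheb_q_add_two]
        exact Or.inl rfl
      · obtain ⟨w', hlen, hx', hw', hc⟩ := hb.exists_shorter_of_replicate_infix hw hx hrun hR
        rw [← hc]
        exact ih _ (h ▸ hlen) hx' hw' rfl
    · exact hb.cont_eq_one_or_le_of_not_replicate_infix hx hrun

end ChebBounds

section Quiddity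

variable {f : ℤ → ℤ → ℝ}

def quiddityWord (f : ℤ → ℤ → ℝ) : ℤ → ℕ → List ℝ
  | _, 0 => []
  | i, m + 1 => f i (i + 2) :: quiddityWord f (i + 1) m

lemma _root_.IsInfFrieze.eq_mul_sub (hf : IsInfFrieze f) {i j : ℤ} (hij : i + 2 ≤ j) :
    f i j = f i (i + 2) * f (i + 1) j - f (i + 2) j := by
  obtain ⟨h₀, h₁, hpos, hdet⟩ := hf
  induction j, hij using Int.leInduction with
  | base => rw [h₀, show i + 2 = i + 1 + 1 by ring, h₁]; ring
  | succ j hj ih =>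
    have d₁ := hdet i j (by omega)
    have d₂ : f (i + 1) j * f (i + 2) (j + 1) - f (i + 1) (j + 1) * f (i + 2) j = 1 := by
      simpa only [add_assoc, one_add_one_eq_two] using hdet (i + 1) j (by omega)
    rw [ih] at d₁
    have key : f (i + 1) j * (f i (j + 1) - (f i (i + 2) * f (i + 1) (j + 1) - f (i + 2) (j + 1)))
        = 0 := by linear_combination d₂ - d₁
    have := (mul_eq_zero.mp key).resolve_left (hpos (i + 1) j (by omega)).ne'
    linarith

lemma cont_quiddityWord (hf : IsInfFrieze f) (i : ℤ) (m : ℕ) :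
    cont (quiddityWord f i m) = f i (i + 1 + m) := by
  suffices h : ∀ i, cont (quiddityWord f i m) = f i (i + 1 + m) ∧
      contTail (quiddityWord f i m) = f (i + 1) (i + 1 + m) from (h i).1
  induction m with
  | zero => intro i; simp [quiddityWord, hf.1, hf.2.1]
  | succ m ih =>
    intro i
    obtain ⟨hc, ht⟩ := ih (i + 1)
    have e₁ : i + 1 + ((m + 1 : ℕ) : ℤ) = i + 2 + m := by push_cast; ring
    have e₂ : i + 1 + 1 = i + 2 := by ring
    rw [quiddityWord, cont_cons, contTail_cons, hc, ht, e₁, e₂]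
    exact ⟨(hf.eq_mul_sub (by omega)).symm, rfl⟩

lemma exists_eq_quiddityWord_of_prefix {t : List ℝ} {i : ℤ} {m : ℕ}
    (h : t <+: quiddityWord f i m) : ∃ n, t = quiddityWord f i n := by
  induction m generalizing i t with
  | zero => exact ⟨0, prefix_nil.mp h⟩
  | succ m ih =>
    rcases prefix_cons_iff.mp h with rfl | ⟨r, rfl, hr⟩
    · exact ⟨0, rfl⟩
    · obtain ⟨n, rfl⟩ := ih hr
      exact ⟨n + 1, rfl⟩

lemma exists_eq_quiddityWord_of_infix {t : List ℝ} {i : ℤ} {m : ℕ}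
    (h : t <:+: quiddityWord f i m) : ∃ k n, t = quiddityWord f k n := by
  induction m generalizing i with
  | zero => exact ⟨i, 0, infix_nil.mp h⟩
  | succ m ih =>
    rcases infix_cons_iff.mp h with h | h
    · exact ⟨i, exists_eq_quiddityWord_of_prefix (m := m + 1) h⟩
    · exact ih h

lemma infixPositive_quiddityWord (hf : IsInfFrieze f) (i : ℤ) (m : ℕ) :
    InfixPositive (quiddityWord f i m) := by
  intro t ht
  obtain ⟨k, n, rfl⟩ := exists_eq_quiddityWord_of_infix ht
  rw [cont_quiddityWord hf]
  exact hf.2.2.1 _ _ (by omega)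

lemma isPosMul_of_mem_quiddityWord {p : ℕ} (hl : IsTypeLambda p f) (i : ℤ) (m : ℕ) :
    ∀ x ∈ quiddityWord f i m, IsPosMul (lam p) x := by
  induction m generalizing i with
  | zero => simp [quiddityWord]
  | succ m ih => exact forall_mem_cons.mpr ⟨hl i, ih (i + 1)⟩

end Quiddity

end Frieze

/-- All entries of an infinite frieze pattern of type `Λ_p` lie in `{1} ∪ [λ_p, ∞)`. -/
theorem infFrieze_entries_one_or_ge_lambda (p : ℕ) (hp : 3 ≤ p) (f : ℤ → ℤ → ℝ)
    (hf : IsInfFrieze f) (hl : IsTypeLambda p f) (i j : ℤ) (hij : i < j) :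
    f i j = 1 ∨ lam p ≤ f i j := by
  obtain ⟨q, rfl⟩ : ∃ q, p = q + 3 := ⟨p - 3, by omega⟩
  obtain ⟨m, rfl⟩ : ∃ m : ℕ, j = i + 1 + m := ⟨(j - i - 1).toNat, by omega⟩
  rw [← Frieze.cont_quiddityWord hf]
  exact (Frieze.chebBounds_lam q).cont_eq_one_or_le (Frieze.isPosMul_of_mem_quiddityWord hl i m)
    (Frieze.infixPositive_quiddityWord hf i m)
end

section
/- Let m ≥ 0 be an integer and let f = (f_{i,j}) be a frieze pattern of height m. Then: (1) f is of type Λ_4 if and only if for all i ∈ ℤ, f_{i,i+k} is a positive integer for every odd k with 1 ≤ k ≤ m+2 and f_{i,i+k} is a positive integer multiple of √2 for every even k with 2 ≤ k ≤ m+2; and (2) f is of type Λ_6 if and only if for all i ∈ ℤ, f_{i,i+k} is a positive integer for every odd k with 1 ≤ k ≤ m+2 and f_{i,i+k} is a positive integer multiple of √3 for every even k with 2 ≤ k ≤ m+2. -/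
/-- A (Coxeter) frieze pattern of height `m`: entries `f i j` for `i+1 ≤ j ≤ i+m+2` are
positive, the bounding rows consist of `1`s, and the unimodular rule holds. -/
def IsFrieze (m : ℕ) (f : ℤ → ℤ → ℝ) : Prop :=
  (∀ i j : ℤ, i + 1 ≤ j → j ≤ i + m + 2 → 0 < f i j) ∧
  (∀ i : ℤ, f i (i + 1) = 1) ∧
  (∀ i : ℤ, f i (i + m + 2) = 1) ∧
  (∀ i j : ℤ, i + 2 ≤ j → j ≤ i + m + 1 →
    f i j * f (i + 1) (j + 1) - f i (j + 1) * f (i + 1) j = 1)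

lemma frieze_rec (m : ℕ) (f : ℤ → ℤ → ℝ) (hf : IsFrieze m f) :
    ∀ k : ℕ, 2 ≤ k → k ≤ m + 1 → ∀ i : ℤ,
      f i (i + k + 1) = f (i + k - 1) (i + k + 1) * f i (i + k) - f i (i + k - 1) := by
  obtain ⟨hpos, hrow1, hrowtop, hrule⟩ := hf
  intro k hk2
  induction k, hk2 using Nat.le_induction with
  | base =>
    intro _ i
    have h := hrule i (i + 2) (by omega) (by push_cast; omega)
    have h1 : f (i + 1) (i + 1 + 1) = 1 := hrow1 (i + 1)
    have h2 : f i (i + 1) = 1 := hrow1 i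
    push_cast
    rw [show i + 1 + 1 = i + 2 by ring] at h1
    rw [show i + (2:ℤ) - 1 = i + 1 by ring]
    linear_combination -h - f i (i + 2 + 1) * h1 + h2
  | succ k hk ih =>
    intro hkm i
    have ihh := ih (by omega) (i + 1)
    have h1 := hrule i (i + (k:ℤ)) (by omega) (by push_cast; omega)
    have h2 := hrule i (i + (k:ℤ) + 1) (by omega) (by push_cast; omega)
    have hp : 0 < f (i + 1) (i + (k:ℤ) + 1) :=
      hpos (i + 1) (i + (k:ℤ) + 1) (by omega) (by push_cast; omega)
    rw [show i + (k:ℤ) + 1 + 1 = i + (k:ℤ) + 2 by ring] at h2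
    rw [show i + 1 + (k:ℤ) + 1 = i + (k:ℤ) + 2 by ring,
        show i + 1 + (k:ℤ) - 1 = i + (k:ℤ) by ring,
        show i + 1 + (k:ℤ) = i + (k:ℤ) + 1 by ring] at ihh
    push_cast
    rw [show i + ((k:ℤ) + 1) + 1 = i + (k:ℤ) + 2 by ring,
        show i + ((k:ℤ) + 1) - 1 = i + (k:ℤ) by ring,
        show i + ((k:ℤ) + 1) = i + (k:ℤ) + 1 by ring]
    set A : ℝ := f i (i + (k:ℤ)) * f (i + 1) (i + (k:ℤ) + 2)
        - f i (i + (k:ℤ) + 2) * f (i + 1) (i + (k:ℤ)) with hA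
    have E1 : f i (i + (k:ℤ) + 2) = A * f i (i + (k:ℤ) + 1) - f i (i + (k:ℤ)) := by
      linear_combination (-(f i (i + (k:ℤ) + 2))) * h1 - f i (i + (k:ℤ)) * h2
    have E2 : f (i + 1) (i + (k:ℤ) + 2)
        = A * f (i + 1) (i + (k:ℤ) + 1) - f (i + 1) (i + (k:ℤ)) := by
      linear_combination (-(f (i + 1) (i + (k:ℤ) + 2))) * h1 - f (i + 1) (i + (k:ℤ)) * h2
    have hQ : f (i + (k:ℤ)) (i + (k:ℤ) + 2) = A := by
      have hqe : f (i + (k:ℤ)) (i + (k:ℤ) + 2) * f (i + 1) (i + (k:ℤ) + 1)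
          = A * f (i + 1) (i + (k:ℤ) + 1) := by linarith
      exact mul_right_cancel₀ hp.ne' hqe
    rw [hQ]; exact E1

lemma frieze_rows (m : ℕ) (f : ℤ → ℤ → ℝ) (hf : IsFrieze m f) (d : ℕ) (s : ℝ)
    (hs : 0 < s) (hss : s * s = d)
    (hq : ∀ i : ℤ, ∃ n : ℕ, 0 < n ∧ f i (i + 2) = n * s) :
    ∀ k : ℕ, 1 ≤ k → k ≤ m + 2 → ∀ i : ℤ,
      (Odd k → ∃ n : ℕ, 0 < n ∧ f i (i + k) = (n : ℝ)) ∧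
      (Even k → ∃ n : ℕ, 0 < n ∧ f i (i + k) = (n : ℝ) * s) := by
  intro k
  induction k using Nat.strong_induction_on with
  | _ k ih =>
    match k with
    | 0 => intro h; omega
    | 1 =>
      intro _ _ i
      refine ⟨fun _ => ⟨1, one_pos, ?_⟩, fun he => absurd he (by decide)⟩
      push_cast
      simpa using hf.2.1 i
    | 2 =>
      intro _ _ i
      refine ⟨fun ho => absurd ho (by decide), fun _ => ?_⟩
      push_cast
      exact hq i
    | (k + 3) =>
      intro _ hkm i
      have hrec := frieze_rec m f hf (k + 2) (by omega) (by omega) i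
      push_cast at hrec
      rw [show i + ((k:ℤ) + 2) + 1 = i + ((k:ℤ) + 3) by ring,
          show i + ((k:ℤ) + 2) - 1 = i + ((k:ℤ) + 1) by ring] at hrec
      obtain ⟨n₀, hn₀, hq₀⟩ := hq (i + ((k:ℤ) + 1))
      rw [show i + ((k:ℤ) + 1) + 2 = i + ((k:ℤ) + 3) by ring] at hq₀
      obtain ⟨hA, hA'⟩ := ih (k + 2) (by omega) (by omega) (by omega) i
      obtain ⟨hB, hB'⟩ := ih (k + 1) (by omega) (by omega) (by omega) i
      push_cast at hA hA' hB hB'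
      have hpos : 0 < f i (i + ((k:ℤ) + 3)) :=
        hf.1 i (i + ((k:ℤ) + 3)) (by omega) (by push_cast; omega)
      rcases Nat.even_or_odd k with hke | hko
      · -- k even : k+3 odd, k+2 even, k+1 odd
        obtain ⟨c, hc⟩ := hke
        obtain ⟨a, ha, hav⟩ := hA' ⟨c + 1, by omega⟩
        obtain ⟨b, hb, hbv⟩ := hB ⟨c, by omega⟩
        refine ⟨fun _ => ?_, fun he => by obtain ⟨e, he'⟩ := he; omega⟩
        have hval : f i (i + ((k:ℤ) + 3)) = ((n₀ * a * d : ℕ) : ℝ) - (b : ℝ) := by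
          rw [hrec, hq₀, hav, hbv]
          push_cast
          linear_combination ((n₀ : ℝ) * a) * hss
        have hlt : b < n₀ * a * d := by
          rw [hval] at hpos
          exact_mod_cast (by linarith : (b : ℝ) < ((n₀ * a * d : ℕ) : ℝ))
        refine ⟨n₀ * a * d - b, by omega, ?_⟩
        push_cast [Nat.cast_sub hlt.le]
        push_cast at hval
        linear_combination hval
      · -- k odd : k+3 even, k+2 odd, k+1 even
        obtain ⟨c, hc⟩ := hko
        obtain ⟨a, ha, hav⟩ := hA ⟨c + 1, by omega⟩
        obtain ⟨b, hb, hbv⟩ := hB' ⟨c + 1, by omega⟩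
        refine ⟨fun ho => by obtain ⟨e, he'⟩ := ho; omega, fun _ => ?_⟩
        have hval : f i (i + ((k:ℤ) + 3)) = (((n₀ * a : ℕ) : ℝ) - (b : ℝ)) * s := by
          rw [hrec, hq₀, hav, hbv]
          push_cast
          ring
        have hc0 : (0 : ℝ) < ((n₀ * a : ℕ) : ℝ) - (b : ℝ) := by
          rw [hval] at hpos
          by_contra hcon
          push_neg at hcon
          nlinarith
        have hlt : b < n₀ * a := by
          exact_mod_cast (by linarith : (b : ℝ) < ((n₀ * a : ℕ) : ℝ))
        refine ⟨n₀ * a - b, by omega, ?_⟩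
        push_cast [Nat.cast_sub hlt.le]
        push_cast at hval
        linear_combination hval

/-- A frieze pattern is of type `Λ_4` (resp. `Λ_6`) iff its odd-numbered rows consist of
positive integers and its even-numbered rows consist of positive integral multiples of
`√2` (resp. `√3`). -/
theorem frieze_type_lambda4_lambda6_characterisation (m : ℕ) (f : ℤ → ℤ → ℝ)
    (hf : IsFrieze m f) :
    (IsTypeLambda 4 f ↔
      (∀ i : ℤ, ∀ k : ℕ, 1 ≤ k → k ≤ m + 2 →
        (Odd k → ∃ n : ℕ, 0 < n ∧ f i (i + k) = (n : ℝ)) ∧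
        (Even k → 2 ≤ k → ∃ n : ℕ, 0 < n ∧ f i (i + k) = (n : ℝ) * Real.sqrt 2))) ∧
    (IsTypeLambda 6 f ↔
      (∀ i : ℤ, ∀ k : ℕ, 1 ≤ k → k ≤ m + 2 →
        (Odd k → ∃ n : ℕ, 0 < n ∧ f i (i + k) = (n : ℝ)) ∧
        (Even k → 2 ≤ k → ∃ n : ℕ, 0 < n ∧ f i (i + k) = (n : ℝ) * Real.sqrt 3))) := by
  have lam4 : lam 4 = Real.sqrt 2 := by
    rw [lam]
    norm_num [Real.cos_pi_div_four]
    ring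
  have lam6 : lam 6 = Real.sqrt 3 := by
    rw [lam]
    norm_num [Real.cos_pi_div_six]
    ring
  have key : ∀ s : ℝ, ∀ d : ℕ, 0 < s → s * s = d →
      ((∀ i : ℤ, ∃ n : ℕ, 0 < n ∧ f i (i + 2) = n * s) ↔
        (∀ i : ℤ, ∀ k : ℕ, 1 ≤ k → k ≤ m + 2 →
          (Odd k → ∃ n : ℕ, 0 < n ∧ f i (i + k) = (n : ℝ)) ∧
          (Even k → 2 ≤ k → ∃ n : ℕ, 0 < n ∧ f i (i + k) = (n : ℝ) * s))) := by
    intro s d hs hss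
    constructor
    · intro hq i k hk1 hk2
      obtain ⟨h1, h2⟩ := frieze_rows m f hf d s hs hss hq k hk1 hk2 i
      exact ⟨h1, fun he _ => h2 he⟩
    · intro hrow i
      have h := (hrow i 2 (by omega) (by omega)).2 (by decide) le_rfl
      push_cast at h
      exact h
  constructor
  · simp only [IsTypeLambda, lam4]
    exact key (Real.sqrt 2) 2 (Real.sqrt_pos.mpr (by norm_num))
      (by rw [Real.mul_self_sqrt (by norm_num)]; norm_num)
  · simp only [IsTypeLambda, lam6]
    exact key (Real.sqrt 3) 3 (Real.sqrt_pos.mpr (by norm_num))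
      (by rw [Real.mul_self_sqrt (by norm_num)]; norm_num)
end

section
/- Let f = (f_{i,j}) be an infinite frieze pattern. Then: (1) f is of type Λ_4 if and only if for all integers i < j, f_{i,j} is a positive integer when j − i is odd and f_{i,j} is a positive integer multiple of √2 when j − i is even (and ≥ 2); and (2) f is of type Λ_6 if and only if for all integers i < j, f_{i,j} is a positive integer when j − i is odd and f_{i,j} is a positive integer multiple of √3 when j − i is even (and ≥ 2). -/
lemma frieze_rec_aux (f : ℤ → ℤ → ℝ) (hf : IsInfFrieze f) :
    ∀ n : ℕ, ∀ i j : ℤ, j = i + 1 + n →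
      f i (j + 1) + f i (j - 1) = f (j - 1) (j + 1) * f i j := by
  intro n
  induction n with
  | zero =>
    intro i j hj
    have hj' : j = i + 1 := by omega
    subst hj'
    have e1 : i + 1 - 1 = i := by ring
    rw [e1, hf.1 i, hf.2.1 i]
    ring
  | succ n IH =>
    intro i j hj
    have IH' := IH (i + 1) j (by omega)
    have A := hf.2.2.2 i j (by omega)
    have B := hf.2.2.2 i (j - 1) (by omega)
    have hj1 : j - 1 + 1 = j := by ring
    rw [hj1] at B
    have hpos := hf.2.2.1 (i + 1) j (by omega)
    have key : (f i (j + 1) + f i (j - 1)) * f (i + 1) j =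
        (f (j - 1) (j + 1) * f i j) * f (i + 1) j := by
      linear_combination f i j * IH' - A + B
    exact mul_right_cancel₀ (ne_of_gt hpos) key

lemma frieze_rec_s18 (f : ℤ → ℤ → ℝ) (hf : IsInfFrieze f) (i j : ℤ) (h : i + 1 ≤ j) :
    f i (j + 1) = f (j - 1) (j + 1) * f i j - f i (j - 1) := by
  have hn : j = i + 1 + ((j - i - 1).toNat : ℤ) := by omega
  have := frieze_rec_aux f hf (j - i - 1).toNat i j hn
  linarith

lemma frieze_ent (f : ℤ → ℤ → ℝ) (hf : IsInfFrieze f) (d : ℤ) (s : ℝ) (hs : s * s = d)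
    (h : ∀ i : ℤ, ∃ m : ℤ, f i (i + 2) = m * s) :
    ∀ k : ℕ, ∀ i : ℤ,
      (Odd k → ∃ m : ℤ, f i (i + k) = m) ∧ (Even k → ∃ m : ℤ, f i (i + k) = m * s) := by
  intro k
  induction k using Nat.strong_induction_on with
  | _ k IH =>
  match k with
  | 0 =>
    intro i
    refine ⟨fun h1 => absurd h1 (by decide), fun _ => ⟨0, by simp [hf.1]⟩⟩
  | 1 =>
    intro i
    refine ⟨fun _ => ⟨1, by simpa using hf.2.1 i⟩, fun h1 => absurd h1 (by decide)⟩
  | (n + 2) =>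
    intro i
    have hrec := frieze_rec_s18 f hf i (i + n + 1) (by omega)
    have e1 : i + (n : ℤ) + 1 - 1 = i + n := by ring
    have e2 : i + (n : ℤ) + 1 + 1 = i + n + 2 := by ring
    rw [e1, e2] at hrec
    obtain ⟨mq, hmq⟩ := h (i + n)
    have harg : i + ((n + 2 : ℕ) : ℤ) = i + (n : ℤ) + 2 := by push_cast; ring
    have harg1 : i + ((n + 1 : ℕ) : ℤ) = i + (n : ℤ) + 1 := by push_cast; ring
    rcases Nat.even_or_odd n with he | ho
    · -- n even, n+2 even, n+1 odd
      obtain ⟨m1, h1⟩ := (IH (n + 1) (by omega) i).1 (Even.add_one he)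
      obtain ⟨m0, h0⟩ := (IH n (by omega) i).2 he
      rw [harg1] at h1
      refine ⟨fun hodd => absurd hodd (by rcases he with ⟨t, ht⟩; rintro ⟨u, hu⟩; omega), fun _ => ?_⟩
      refine ⟨mq * m1 - m0, ?_⟩
      rw [harg, hrec, hmq, h1, h0]
      push_cast
      ring
    · -- n odd, n+2 odd, n+1 even
      obtain ⟨m1, h1⟩ := (IH (n + 1) (by omega) i).2 (Odd.add_one ho)
      obtain ⟨m0, h0⟩ := (IH n (by omega) i).1 ho
      rw [harg1] at h1
      refine ⟨fun _ => ?_, fun heven => absurd heven (by rcases ho with ⟨t, ht⟩; rintro ⟨u, hu⟩; omega)⟩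
      refine ⟨mq * m1 * d - m0, ?_⟩
      rw [harg, hrec, hmq, h1, h0]
      push_cast
      linear_combination ((mq : ℝ) * m1) * hs

lemma frieze_char (f : ℤ → ℤ → ℝ) (hf : IsInfFrieze f) (d : ℕ) (hd : 2 ≤ d) (s : ℝ)
    (hs : s = Real.sqrt d) :
    (∀ i : ℤ, ∃ n : ℕ, 0 < n ∧ f i (i + 2) = n * s) ↔
      (∀ i j : ℤ, i < j →
        (Odd (j - i) → ∃ n : ℕ, 0 < n ∧ f i j = (n : ℝ)) ∧
        (Even (j - i) → ∃ n : ℕ, 0 < n ∧ f i j = (n : ℝ) * s)) := by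
  have hspos : 0 < s := by
    rw [hs]; exact Real.sqrt_pos.2 (by exact_mod_cast Nat.lt_of_lt_of_le (by norm_num) hd)
  have hss : s * s = ((d : ℤ) : ℝ) := by
    rw [hs, Real.mul_self_sqrt (by positivity)]; push_cast; ring
  constructor
  · intro h i j hij
    have h' : ∀ i : ℤ, ∃ m : ℤ, f i (i + 2) = m * s := by
      intro i'
      obtain ⟨n, _, hn⟩ := h i'
      exact ⟨n, by exact_mod_cast hn⟩
    have hent := frieze_ent f hf d s hss h' (j - i).toNat i
    have hji : i + ((j - i).toNat : ℤ) = j := by omega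
    rw [hji] at hent
    have hfpos : 0 < f i j := hf.2.2.1 i j (by omega)
    constructor
    · intro hodd
      have hoddn : Odd (j - i).toNat := by
        rcases hodd with ⟨t, ht⟩; exact ⟨t.toNat, by omega⟩
      obtain ⟨m, hm⟩ := hent.1 hoddn
      have hmpos : 0 < m := by
        have : (0 : ℝ) < (m : ℝ) := by rw [← hm]; exact hfpos
        exact_mod_cast this
      refine ⟨m.toNat, by omega, ?_⟩
      rw [hm]
      norm_cast
      omega
    · intro heven
      have hevenn : Even (j - i).toNat := by
        rcases heven with ⟨t, ht⟩; exact ⟨t.toNat, by omega⟩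
      obtain ⟨m, hm⟩ := hent.2 hevenn
      have hmpos : 0 < m := by
        have hm' : (0 : ℝ) < (m : ℝ) * s := by rw [← hm]; exact hfpos
        have : (0 : ℝ) < (m : ℝ) := by nlinarith
        exact_mod_cast this
      refine ⟨m.toNat, by omega, ?_⟩
      rw [hm]
      congr 1
      norm_cast
      omega
  · intro H i
    obtain ⟨n, hn, e⟩ := (H i (i + 2) (by omega)).2
      (by rw [show i + 2 - i = (2 : ℤ) from by ring]; exact even_two)
    exact ⟨n, hn, e⟩

/-- An infinite frieze pattern is of type `Λ_4` (resp. `Λ_6`) iff its odd-numbered rows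
consist of positive integers and its even-numbered rows consist of positive integral
multiples of `√2` (resp. `√3`). -/
theorem infFrieze_type_lambda4_lambda6_characterisation (f : ℤ → ℤ → ℝ)
    (hf : IsInfFrieze f) :
    (IsTypeLambda 4 f ↔
      (∀ i j : ℤ, i < j →
        (Odd (j - i) → ∃ n : ℕ, 0 < n ∧ f i j = (n : ℝ)) ∧
        (Even (j - i) → ∃ n : ℕ, 0 < n ∧ f i j = (n : ℝ) * Real.sqrt 2))) ∧
    (IsTypeLambda 6 f ↔
      (∀ i j : ℤ, i < j →
        (Odd (j - i) → ∃ n : ℕ, 0 < n ∧ f i j = (n : ℝ)) ∧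
        (Even (j - i) → ∃ n : ℕ, 0 < n ∧ f i j = (n : ℝ) * Real.sqrt 3))) := by
  have l4 : lam 4 = Real.sqrt 2 := by
    rw [lam, show ((4 : ℕ) : ℝ) = 4 by norm_num, Real.cos_pi_div_four]
    ring
  have l6 : lam 6 = Real.sqrt 3 := by
    rw [lam, show ((6 : ℕ) : ℝ) = 6 by norm_num, Real.cos_pi_div_six]
    ring
  have h2 : Real.sqrt 2 = Real.sqrt ((2 : ℕ) : ℝ) := by norm_num
  have h3 : Real.sqrt 3 = Real.sqrt ((3 : ℕ) : ℝ) := by norm_num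
  constructor
  · rw [show (IsTypeLambda 4 f) ↔ (∀ i : ℤ, ∃ n : ℕ, 0 < n ∧ f i (i + 2) = n * Real.sqrt 2) from
      by unfold IsTypeLambda; rw [l4]]
    exact frieze_char f hf 2 le_rfl (Real.sqrt 2) h2
  · rw [show (IsTypeLambda 6 f) ↔ (∀ i : ℤ, ∃ n : ℕ, 0 < n ∧ f i (i + 2) = n * Real.sqrt 3) from
      by unfold IsTypeLambda; rw [l6]]
    exact frieze_char f hf 3 (by norm_num) (Real.sqrt 3) h3
end
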